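/- arXiv:math/0202259 — 6 statements merged into one kernel-verified Lean document; each statement's English description precedes it below -/
import Mathlib

section
/- Let A be a KV-algebra over a field F of characteristic zero, W and V KV-bimodules of A. Form the semidirect product KV-algebra G = A ⊕ W with multiplication (a,w)(a',w') := (aa', aw' + wa'), and regard V as a KV-bimodule of G via (a,w)·v := av and v·(a,w) := va. For p + q = k, say that a k-linear map f : G^k → V has bidegree (p,q) if f(ξ_1,…,ξ_k) = 0 whenever every argument ξ_i lies in A ⊕ {0} or in {0} ⊕ W and the number of arguments lying in {0} ⊕ W is different from p. Then for every k-cochain f of bidegree (p,q), the KV coboundary δf is a (k+1)-cochain of bidegree (p, q+1). -/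
/-- The KV coboundary operator, defined on raw `q`-cochains (here `q = n+1 ≥ 1`). -/
def kvδ {A W : Type*} [AddCommGroup A] [AddCommGroup W]
    (mul : A → A → A) (l : A → W → W) (r : W → A → W) (n : ℕ)
    (f : (Fin (n + 1) → A) → W) : (Fin (n + 2) → A) → W :=
  fun v =>
    ∑ j : Fin (n + 1),
      (-1 : ℤ) ^ (j.val + 1) •
        (l (v j.castSucc) (f fun i => v (j.castSucc.succAbove i))
          - ∑ k : Fin (n + 1),
              f (Function.update (fun i => v (j.castSucc.succAbove i)) k
                  (mul (v j.castSucc) (v (j.castSucc.succAbove k))))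
          + r (f (Function.update (fun i => v (j.castSucc.succAbove i)) (Fin.last n)
                  (v j.castSucc)))
              (v (Fin.last (n + 1))))

/-- A `k`-cochain on `G = A ⊕ W` with values in `V` has bidegree `(p, k−p)` if it
vanishes on every tuple all of whose arguments lie in `A ⊕ {0}` or in `{0} ⊕ W`
and in which the number of arguments lying in `{0} ⊕ W` differs from `p`. -/
def hasBidegree {A W V : Type*} [Zero A] [Zero W] [Zero V] {k : ℕ}
    (p : ℕ) (f : (Fin k → A × W) → V) : Prop :=
  ∀ v : Fin k → A × W,
    (∀ i, (v i).2 = 0 ∨ (v i).1 = 0) →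
    Nat.card {i : Fin k // (v i).1 = 0} ≠ p → f v = 0

/-!
Every term of `δf(ξ₁,…,ξ_{k+1})` is either killed by an action of a `W`-type argument
(which acts by `0`), or is `f` evaluated on a homogeneous tuple with exactly as many
`W`-type arguments as `(ξ₁,…,ξ_{k+1})`, or is `f` with a zero argument. The last two
cases hold because the product of homogeneous elements of `A ⊕ W` is zero or homogeneous
with `W`-degree the sum of the `W`-degrees of the factors.
-/

namespace KV

variable {A W : Type*}

section Degree

variable [Zero A] [DecidableEq A]

/-- `1` on `{0} ⊕ W` (including `0`), `0` on the rest of `A ⊕ W`. -/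
def wDegree (x : A × W) : ℕ :=
  if x.1 = 0 then 1 else 0

lemma natCard_eq_sum_wDegree {k : ℕ} (v : Fin k → A × W) :
    Nat.card {i : Fin k // (v i).1 = 0} = ∑ i, wDegree (v i) := by
  rw [Nat.card_eq_fintype_card, Fintype.card_subtype, Finset.card_filter]
  rfl

lemma sum_wDegree_update {k : ℕ} (u : Fin k → A × W) (i : Fin k) (x : A × W) :
    ∑ j, wDegree (Function.update u i x j) + wDegree (u i)
      = ∑ j, wDegree (u j) + wDegree x := by
  simp_rw [Function.apply_update (fun _ => wDegree)]
  rw [Finset.sum_update_of_mem (Finset.mem_univ i), Fintype.sum_eq_add_sum_compl i,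
    Finset.compl_eq_univ_sdiff]
  ring

variable [Zero W]

def IsHomogeneous (x : A × W) : Prop :=
  x.2 = 0 ∨ x.1 = 0

variable {V : Type*} [Zero V] {k p : ℕ} {f : (Fin k → A × W) → V}

lemma _root_.hasBidegree.apply_eq_zero (hf : hasBidegree p f) {v : Fin k → A × W}
    (hv : ∀ i, IsHomogeneous (v i)) (hdeg : ∑ i, wDegree (v i) ≠ p) : f v = 0 :=
  hf v hv (natCard_eq_sum_wDegree v ▸ hdeg)

lemma _root_.hasBidegree.apply_update_eq_zero (hf : hasBidegree p f) {u : Fin k → A × W}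
    (hu : ∀ i, IsHomogeneous (u i)) {i : Fin k} {x : A × W} (hx : IsHomogeneous x)
    (hdeg : ∑ j, wDegree (u j) + wDegree x ≠ p + wDegree (u i)) :
    f (Function.update u i x) = 0 := by
  refine hf.apply_eq_zero (fun j => ?_) fun h => hdeg ?_
  · rcases eq_or_ne j i with rfl | hj
    · simpa using hx
    · simpa [Function.update_of_ne hj] using hu j
  · rw [← sum_wDegree_update, h]

end Degree

section SemidirectProduct

variable {R : Type*} [CommSemiring R] [AddCommMonoid A] [Module R A]
  [AddCommMonoid W] [Module R W]

def semidirectMul (mul : A →ₗ[R] A →ₗ[R] A) (lW : A →ₗ[R] W →ₗ[R] W) (rW : W →ₗ[R] A →ₗ[R] W)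
    (x y : A × W) : A × W :=
  (mul x.1 y.1, lW x.1 y.2 + rW x.2 y.1)

lemma semidirectMul_eq_zero_or [DecidableEq A] (mul : A →ₗ[R] A →ₗ[R] A) (lW : A →ₗ[R] W →ₗ[R] W)
    (rW : W →ₗ[R] A →ₗ[R] W) {x y : A × W} (hx : IsHomogeneous x) (hy : IsHomogeneous y) :
    semidirectMul mul lW rW x y = 0 ∨ (IsHomogeneous (semidirectMul mul lW rW x y) ∧
      wDegree (semidirectMul mul lW rW x y) = wDegree x + wDegree y) := by
  obtain ⟨x₁, x₂⟩ := x
  obtain ⟨y₁, y₂⟩ := y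
  rcases hx with rfl | rfl <;> rcases hy with rfl | rfl
  · by_cases hm : mul x₁ y₁ = 0
    · simp [semidirectMul, hm]
    · have hx₁ : x₁ ≠ 0 := by rintro rfl; simp at hm
      have hy₁ : y₁ ≠ 0 := by rintro rfl; simp at hm
      simp [semidirectMul, IsHomogeneous, wDegree, hm, hx₁, hy₁]
  · by_cases hx₁ : x₁ = 0
    · simp [semidirectMul, hx₁]
    · simp [semidirectMul, IsHomogeneous, wDegree, hx₁]
  · by_cases hy₁ : y₁ = 0
    · simp [semidirectMul, hy₁]
    · simp [semidirectMul, IsHomogeneous, wDegree, hy₁]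
  · simp [semidirectMul]

end SemidirectProduct

section CoboundaryTerms

variable {R : Type*} [CommSemiring R] [DecidableEq A] [AddCommMonoid A] [Module R A]
  [AddCommMonoid W] [Module R W] {V : Type*} [AddCommMonoid V] [Module R V]
  {m p : ℕ} {f : MultilinearMap R (fun _ : Fin (m + 1) => A × W) V} (hf : hasBidegree p ⇑f)
  {v : Fin (m + 2) → A × W} (hv : ∀ i, IsHomogeneous (v i))
  (hdeg : ∑ i, wDegree (v i) ≠ p) (q : Fin (m + 2))
include hf hv hdeg

lemma left_action_term_eq_zero (lV : A →ₗ[R] V →ₗ[R] V) :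
    lV (v q).1 (f fun i => v (q.succAbove i)) = 0 := by
  rw [Fin.sum_univ_succAbove _ q] at hdeg
  by_cases hq : (v q).1 = 0
  · simp [hq]
  · rw [hf.apply_eq_zero (fun i => hv _) (by simpa [wDegree, hq] using hdeg), map_zero]

lemma product_term_eq_zero (mul : A →ₗ[R] A →ₗ[R] A) (lW : A →ₗ[R] W →ₗ[R] W)
    (rW : W →ₗ[R] A →ₗ[R] W) (i : Fin (m + 1)) :
    f (Function.update (fun j => v (q.succAbove j)) i
      (semidirectMul mul lW rW (v q) (v (q.succAbove i)))) = 0 := by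
  rw [Fin.sum_univ_succAbove _ q] at hdeg
  rcases semidirectMul_eq_zero_or mul lW rW (hv q) (hv (q.succAbove i)) with h0 | ⟨hhom, hprod⟩
  · rw [h0]
    exact f.map_update_zero _ i
  · refine hf.apply_update_eq_zero (fun j => hv _) hhom ?_
    rw [hprod]
    omega

lemma right_action_term_eq_zero (rV : V →ₗ[R] A →ₗ[R] V) (i : Fin (m + 1)) :
    rV (f (Function.update (fun j => v (q.succAbove j)) i (v q))) (v (q.succAbove i)).1
      = 0 := by
  rw [Fin.sum_univ_succAbove _ q] at hdeg
  by_cases hi : (v (q.succAbove i)).1 = 0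
  · simp [hi]
  · have hi' : wDegree (v (q.succAbove i)) = 0 := if_neg hi
    rw [hf.apply_update_eq_zero (fun j => hv _) (hv q) (by omega), map_zero,
      LinearMap.zero_apply]

end CoboundaryTerms

end KV

open KV in
theorem kv_coboundary_preserves_bidegree_general
    {F : Type*} [Field F]
    {A : Type*} [AddCommGroup A] [Module F A]
    {W : Type*} [AddCommGroup W] [Module F W]
    {V : Type*} [AddCommGroup V] [Module F V]
    (mul : A →ₗ[F] A →ₗ[F] A)
    (lW : A →ₗ[F] W →ₗ[F] W) (rW : W →ₗ[F] A →ₗ[F] W)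
    (lV : A →ₗ[F] V →ₗ[F] V) (rV : V →ₗ[F] A →ₗ[F] V)
    (n p : ℕ)
    (f : MultilinearMap F (fun _ : Fin (n + 1) => A × W) V)
    (hf : hasBidegree p ⇑f) :
    hasBidegree p
      (kvδ (fun x y => (mul x.1 y.1, lW x.1 y.2 + rW x.2 y.1))
        (fun x v => lV x.1 v) (fun v x => rV v x.1) n ⇑f) := by
  classical
  intro v hv hdeg
  rw [natCard_eq_sum_wDegree] at hdeg
  refine Finset.sum_eq_zero fun j _ => ?_
  have hlast : j.castSucc.succAbove (Fin.last n) = Fin.last (n + 1) :=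
    (Fin.succAbove_castSucc_of_le j _ (Fin.le_last j)).trans (Fin.succ_last n)
  have hright := right_action_term_eq_zero hf hv hdeg j.castSucc rV (Fin.last n)
  rw [hlast] at hright
  have hprod := product_term_eq_zero hf hv hdeg j.castSucc mul lW rW
  simp only [semidirectMul] at hprod
  dsimp only
  rw [left_action_term_eq_zero hf hv hdeg j.castSucc lV,
    Finset.sum_eq_zero fun i _ => hprod i, hright]
  simp

/-- on the semidirect product `G = A ⊕ W`, with `V` a KV-bimodule of `G`
via `(a,w)·v = av`, `v·(a,w) = va`, the KV coboundary sends every `k`-cochain of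
bidegree `(p,q)` (with `p + q = k`, here `k = n + 1`) to a `(k+1)`-cochain of
bidegree `(p, q+1)`. -/
theorem kv_coboundary_preserves_bidegree
    {F : Type*} [Field F] [CharZero F]
    {A : Type*} [AddCommGroup A] [Module F A]
    {W : Type*} [AddCommGroup W] [Module F W]
    {V : Type*} [AddCommGroup V] [Module F V]
    (mul : A →ₗ[F] A →ₗ[F] A)
    (hA : ∀ a b c : A, mul (mul a b) c - mul a (mul b c)
        = mul (mul b a) c - mul b (mul a c))
    (lW : A →ₗ[F] W →ₗ[F] W) (rW : W →ₗ[F] A →ₗ[F] W)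
    (hW1 : ∀ (a b : A) (w : W), lW (mul a b) w - lW a (lW b w)
        = lW (mul b a) w - lW b (lW a w))
    (hW2 : ∀ (a : A) (w : W) (b : A), rW (lW a w) b - lW a (rW w b)
        = rW (rW w a) b - rW w (mul a b))
    (lV : A →ₗ[F] V →ₗ[F] V) (rV : V →ₗ[F] A →ₗ[F] V)
    (hV1 : ∀ (a b : A) (v : V), lV (mul a b) v - lV a (lV b v)
        = lV (mul b a) v - lV b (lV a v))
    (hV2 : ∀ (a : A) (v : V) (b : A), rV (lV a v) b - lV a (rV v b)
        = rV (rV v a) b - rV v (mul a b))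
    (n p q : ℕ) (hpq : p + q = n + 1)
    (f : MultilinearMap F (fun _ : Fin (n + 1) => A × W) V)
    (hf : hasBidegree p ⇑f) :
    hasBidegree p
      (kvδ (fun x y => (mul x.1 y.1, lW x.1 y.2 + rW x.2 y.1))
        (fun x v => lV x.1 v) (fun v x => rV v x.1) n ⇑f) :=
  kv_coboundary_preserves_bidegree_general mul lW rW lV rV n p f hf
end

section
/- Let A be a KV-algebra over a field F of characteristic zero, W a KV-bimodule of A, and ω : A × A → W a bilinear map. Equip the vector space W ⊕ A with the multiplication (w,a)(w',a') := (aw' + wa' + ω(a,a'), aa'). Then this multiplication is left-symmetric (i.e. makes W ⊕ A a KV-algebra) if and only if ω is a 2-cocycle: δω(a,b,c) = −aω(b,c) + ω(ab,c) + ω(b,ac) − ω(b,a)c + bω(a,c) − ω(ba,c) − ω(a,bc) + ω(a,b)c = 0 for all a,b,c ∈ A. -/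
/-! The associator of `W × A`, left-symmetrized, has `A`-component the left-symmetrized
associator of `A`, and `W`-component the sum of the three defects of the bimodule identities
(one for each position of the `W`-entry) plus `δω(a,b,c)`. Hence, when `A` is a KV-algebra and
`W` a KV-bimodule, left-symmetry of `W × A` is exactly `δω = 0`; conversely, testing it on
elements with zero `W`-part isolates `δω`. -/

namespace KV

section LeftSymmetric

variable {X : Type*} [Sub X]

def associator (m : X → X → X) (x y z : X) : X :=
  m (m x y) z - m x (m y z)

def IsLeftSymmetric (m : X → X → X) : Prop :=
  ∀ x y z, associator m x y z = associator m y x z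

end LeftSymmetric

variable {R A W : Type*} [CommRing R] [AddCommGroup A] [Module R A]
  [AddCommGroup W] [Module R W]
  (mul : A →ₗ[R] A →ₗ[R] A) (l : A →ₗ[R] W →ₗ[R] W) (r : W →ₗ[R] A →ₗ[R] W)
  (ω : A →ₗ[R] A →ₗ[R] W)

def extMul (x y : W × A) : W × A :=
  (l x.2 y.1 + r x.1 y.2 + ω x.2 y.2, mul x.2 y.2)

def kvCoboundary (a b c : A) : W :=
  - l a (ω b c) + ω (mul a b) c + ω b (mul a c) - r (ω b a) c
    + l b (ω a c) - ω (mul b a) c - ω a (mul b c) + r (ω a b) c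

theorem snd_associator_extMul (x y z : W × A) :
    (associator (extMul mul l r ω) x y z).2 = associator (fun a b => mul a b) x.2 y.2 z.2 :=
  rfl

theorem fst_associator_sub_associator_extMul (w₁ w₂ w₃ : W) (a b c : A) :
    (associator (extMul mul l r ω) (w₁, a) (w₂, b) (w₃, c)
        - associator (extMul mul l r ω) (w₂, b) (w₁, a) (w₃, c)).1
      = ((l (mul a b) w₃ - l a (l b w₃)) - (l (mul b a) w₃ - l b (l a w₃)))
        + ((r (l a w₂) c - l a (r w₂ c)) - (r (r w₂ a) c - r w₂ (mul a c)))
        - ((r (l b w₁) c - l b (r w₁ c)) - (r (r w₁ b) c - r w₁ (mul b c)))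
        + kvCoboundary mul l r ω a b c := by
  simp only [associator, extMul, kvCoboundary, Prod.fst_sub, map_add, LinearMap.add_apply]
  abel

variable {mul l r}

theorem isLeftSymmetric_extMul_iff
    (hA : IsLeftSymmetric (fun a b : A => mul a b))
    (hW1 : ∀ (a b : A) (w : W), l (mul a b) w - l a (l b w)
        = l (mul b a) w - l b (l a w))
    (hW2 : ∀ (a : A) (w : W) (b : A), r (l a w) b - l a (r w b)
        = r (r w a) b - r w (mul a b)) :
    IsLeftSymmetric (extMul mul l r ω) ↔ ∀ a b c, kvCoboundary mul l r ω a b c = 0 := by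
  constructor
  · intro h a b c
    have h₀ := congrArg Prod.fst (sub_eq_zero.mpr (h (0, a) (0, b) (0, c)))
    simpa only [fst_associator_sub_associator_extMul, map_zero, LinearMap.zero_apply,
      sub_zero, zero_add, Prod.fst_zero] using h₀
  · rintro h ⟨w₁, a⟩ ⟨w₂, b⟩ ⟨w₃, c⟩
    rw [← sub_eq_zero]
    ext
    · rw [fst_associator_sub_associator_extMul, sub_eq_zero.mpr (hW1 a b w₃),
        sub_eq_zero.mpr (hW2 a w₂ c), sub_eq_zero.mpr (hW2 b w₁ c), h]
      simp
    · rw [Prod.snd_sub, snd_associator_extMul, snd_associator_extMul, hA]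
      exact sub_self _

end KV

open KV in
theorem extension_kv_iff_two_cocycle_general
    {F : Type*} [Field F]
    {A : Type*} [AddCommGroup A] [Module F A]
    {W : Type*} [AddCommGroup W] [Module F W]
    (mul : A →ₗ[F] A →ₗ[F] A)
    (hA : ∀ a b c : A, mul (mul a b) c - mul a (mul b c)
        = mul (mul b a) c - mul b (mul a c))
    (l : A →ₗ[F] W →ₗ[F] W) (r : W →ₗ[F] A →ₗ[F] W)
    (hW1 : ∀ (a b : A) (w : W), l (mul a b) w - l a (l b w)
        = l (mul b a) w - l b (l a w))
    (hW2 : ∀ (a : A) (w : W) (b : A), r (l a w) b - l a (r w b)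
        = r (r w a) b - r w (mul a b))
    (ω : A →ₗ[F] A →ₗ[F] W) :
    letI mulT : W × A → W × A → W × A :=
      fun x y => (l x.2 y.1 + r x.1 y.2 + ω x.2 y.2, mul x.2 y.2)
    (∀ x y z : W × A, mulT (mulT x y) z - mulT x (mulT y z)
        = mulT (mulT y x) z - mulT y (mulT x z))
    ↔ (∀ a b c : A,
        - l a (ω b c) + ω (mul a b) c + ω b (mul a c) - r (ω b a) c
          + l b (ω a c) - ω (mul b a) c - ω a (mul b c) + r (ω a b) c = 0) :=
  isLeftSymmetric_extMul_iff ω hA hW1 hW2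

/-- equip `W ⊕ A` with `(w,a)(w',a') := (aw' + wa' + ω(a,a'), aa')`.
This multiplication is left-symmetric (makes `W ⊕ A` a KV-algebra) if and only if
`ω` is a KV 2-cocycle:
`−aω(b,c) + ω(ab,c) + ω(b,ac) − ω(b,a)c + bω(a,c) − ω(ba,c) − ω(a,bc) + ω(a,b)c = 0`. -/
theorem extension_kv_iff_two_cocycle
    {F : Type*} [Field F] [CharZero F]
    {A : Type*} [AddCommGroup A] [Module F A]
    {W : Type*} [AddCommGroup W] [Module F W]
    (mul : A →ₗ[F] A →ₗ[F] A)
    (hA : ∀ a b c : A, mul (mul a b) c - mul a (mul b c)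
        = mul (mul b a) c - mul b (mul a c))
    (l : A →ₗ[F] W →ₗ[F] W) (r : W →ₗ[F] A →ₗ[F] W)
    (hW1 : ∀ (a b : A) (w : W), l (mul a b) w - l a (l b w)
        = l (mul b a) w - l b (l a w))
    (hW2 : ∀ (a : A) (w : W) (b : A), r (l a w) b - l a (r w b)
        = r (r w a) b - r w (mul a b))
    (ω : A →ₗ[F] A →ₗ[F] W) :
    letI mulT : W × A → W × A → W × A :=
      fun x y => (l x.2 y.1 + r x.1 y.2 + ω x.2 y.2, mul x.2 y.2)
    (∀ x y z : W × A, mulT (mulT x y) z - mulT x (mulT y z)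
        = mulT (mulT y x) z - mulT y (mulT x z))
    ↔ (∀ a b c : A,
        - l a (ω b c) + ω (mul a b) c + ω b (mul a c) - r (ω b a) c
          + l b (ω a c) - ω (mul b a) c - ω a (mul b c) + r (ω a b) c = 0) :=
  extension_kv_iff_two_cocycle_general mul hA l r hW1 hW2 ω
end

section
/- Let V and W be KV-bimodules of a KV-algebra A over a field F of characteristic zero, and let θ : A × W → V and ψ : W × A → V be bilinear maps satisfying, for all a,b ∈ A and w ∈ W: (i) −aθ(b,w) + θ(ab,w) + θ(b,aw) + bθ(a,w) − θ(ba,w) − θ(a,bw) = 0, and (ii) −aψ(w,b) + ψ(aw,b) + ψ(w,ab) − ψ(w,a)b − ψ(wa,b) − θ(a,wb) + θ(a,w)b = 0. Then T := V ⊕ W with the actions a·(v,w) := (av + θ(a,w), aw) and (v,w)·a := (va + ψ(w,a), wa) is a KV-bimodule of A, V ⊕ {0} is a sub-bimodule of T, and the quotient T/(V ⊕ {0}) is isomorphic to W as a KV-bimodule. -/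
/-!
On `T = V × W` the actions differ from the direct-sum actions only by the correction terms
`θ` and `ψ` in the `V`-component. Expanding an associator of `T`, its `W`-component is the
associator of `W`, and its `V`-component is the associator of `V` plus the cocycle
expression in `θ` (resp. `ψ` and `θ`); so the KV-identities for `T` are exactly the
KV-identities for `V` and `W` together with the cocycle identities (i) and (ii).
-/

namespace KV

variable {R A V W : Type*}

section Identities

variable {M : Type*} [Sub M]

/-- Left symmetry of the associator `(a, b, m) = (b, a, m)`. -/
def LeftSymmetric (mul : A → A → A) (l : A → M → M) : Prop :=
  ∀ (a b : A) (m : M), l (mul a b) m - l a (l b m) = l (mul b a) m - l b (l a m)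

/-- The identity `(a, m, b) = (m, a, b)`. -/
def MiddleSymmetric (mul : A → A → A) (l : A → M → M) (r : M → A → M) : Prop :=
  ∀ (a : A) (m : M) (b : A), r (l a m) b - l a (r m b) = r (r m a) b - r m (mul a b)

end Identities

variable [CommRing R] [AddCommGroup A] [Module R A] [AddCommGroup V] [Module R V]
  [AddCommGroup W] [Module R W]

def IsLeftCocycle (mul : A →ₗ[R] A →ₗ[R] A) (lV : A →ₗ[R] V →ₗ[R] V)
    (lW : A →ₗ[R] W →ₗ[R] W) (θ : A →ₗ[R] W →ₗ[R] V) : Prop :=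
  ∀ (a b : A) (w : W), - lV a (θ b w) + θ (mul a b) w + θ b (lW a w)
    + lV b (θ a w) - θ (mul b a) w - θ a (lW b w) = 0

def IsMiddleCocycle (mul : A →ₗ[R] A →ₗ[R] A) (lV : A →ₗ[R] V →ₗ[R] V)
    (rV : V →ₗ[R] A →ₗ[R] V) (lW : A →ₗ[R] W →ₗ[R] W) (rW : W →ₗ[R] A →ₗ[R] W)
    (θ : A →ₗ[R] W →ₗ[R] V) (ψ : W →ₗ[R] A →ₗ[R] V) : Prop :=
  ∀ (a : A) (w : W) (b : A), - lV a (ψ w b) + ψ (lW a w) b + ψ w (mul a b) - rV (ψ w a) b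
    - ψ (rW w a) b - θ a (rW w b) + rV (θ a w) b = 0

def extLeft (lV : A →ₗ[R] V →ₗ[R] V) (lW : A →ₗ[R] W →ₗ[R] W) (θ : A →ₗ[R] W →ₗ[R] V) :
    A → V × W → V × W :=
  fun a p => (lV a p.1 + θ a p.2, lW a p.2)

def extRight (rV : V →ₗ[R] A →ₗ[R] V) (rW : W →ₗ[R] A →ₗ[R] W) (ψ : W →ₗ[R] A →ₗ[R] V) :
    V × W → A → V × W :=
  fun p a => (rV p.1 a + ψ p.2 a, rW p.2 a)

variable {mul : A →ₗ[R] A →ₗ[R] A} {lV : A →ₗ[R] V →ₗ[R] V} {rV : V →ₗ[R] A →ₗ[R] V}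
  {lW : A →ₗ[R] W →ₗ[R] W} {rW : W →ₗ[R] A →ₗ[R] W}
  {θ : A →ₗ[R] W →ₗ[R] V} {ψ : W →ₗ[R] A →ₗ[R] V}

theorem LeftSymmetric.extLeft (hV : LeftSymmetric (fun a b => mul a b) fun a v => lV a v)
    (hW : LeftSymmetric (fun a b => mul a b) fun a w => lW a w)
    (hθ : IsLeftCocycle mul lV lW θ) :
    LeftSymmetric (fun a b => mul a b) (extLeft lV lW θ) := by
  intro a b p
  ext
  · have hVp := hV a b p.1
    have hθp := hθ a b p.2
    simp only [KV.extLeft, Prod.fst_sub, map_add]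
    rw [sub_eq_sub_iff_sub_eq_sub] at hVp ⊢
    linear_combination (norm := abel) hVp + hθp
  · exact hW a b p.2

theorem MiddleSymmetric.extLeft_extRight
    (hV : MiddleSymmetric (fun a b => mul a b) (fun a v => lV a v) fun v a => rV v a)
    (hW : MiddleSymmetric (fun a b => mul a b) (fun a w => lW a w) fun w a => rW w a)
    (hψ : IsMiddleCocycle mul lV rV lW rW θ ψ) :
    MiddleSymmetric (fun a b => mul a b) (extLeft lV lW θ) (extRight rV rW ψ) := by
  intro a p b
  ext
  · have hVp := hV a p.1 b
    have hψp := hψ a p.2 b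
    simp only [KV.extLeft, KV.extRight, Prod.fst_sub, map_add, LinearMap.add_apply]
    linear_combination (norm := abel) hVp + hψp
  · exact hW a p.2 b

end KV

theorem extension_of_kv_modules_from_cocycle_general
    {F : Type*} [Field F]
    {A : Type*} [AddCommGroup A] [Module F A]
    {V : Type*} [AddCommGroup V] [Module F V]
    {W : Type*} [AddCommGroup W] [Module F W]
    (mul : A →ₗ[F] A →ₗ[F] A)
    (lV : A →ₗ[F] V →ₗ[F] V) (rV : V →ₗ[F] A →ₗ[F] V)
    (hV1 : ∀ (a b : A) (v : V), lV (mul a b) v - lV a (lV b v)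
        = lV (mul b a) v - lV b (lV a v))
    (hV2 : ∀ (a : A) (v : V) (b : A), rV (lV a v) b - lV a (rV v b)
        = rV (rV v a) b - rV v (mul a b))
    (lW : A →ₗ[F] W →ₗ[F] W) (rW : W →ₗ[F] A →ₗ[F] W)
    (hW1 : ∀ (a b : A) (w : W), lW (mul a b) w - lW a (lW b w)
        = lW (mul b a) w - lW b (lW a w))
    (hW2 : ∀ (a : A) (w : W) (b : A), rW (lW a w) b - lW a (rW w b)
        = rW (rW w a) b - rW w (mul a b))
    (θ : A →ₗ[F] W →ₗ[F] V) (ψ : W →ₗ[F] A →ₗ[F] V)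
    -- cocycle identity (i)
    (hθ : ∀ (a b : A) (w : W),
      - lV a (θ b w) + θ (mul a b) w + θ b (lW a w)
        + lV b (θ a w) - θ (mul b a) w - θ a (lW b w) = 0)
    -- cocycle identity (ii)
    (hψ : ∀ (a : A) (w : W) (b : A),
      - lV a (ψ w b) + ψ (lW a w) b + ψ w (mul a b) - rV (ψ w a) b
        - ψ (rW w a) b - θ a (rW w b) + rV (θ a w) b = 0) :
    -- the actions on `T = V ⊕ W`
    letI lT : A → V × W → V × W := fun a p => (lV a p.1 + θ a p.2, lW a p.2)
    letI rT : V × W → A → V × W := fun p a => (rV p.1 a + ψ p.2 a, rW p.2 a)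
    -- (1) `T` is a KV-bimodule of `A`
    (∀ (a b : A) (p : V × W), lT (mul a b) p - lT a (lT b p)
        = lT (mul b a) p - lT b (lT a p))
    ∧ (∀ (a : A) (p : V × W) (b : A), rT (lT a p) b - lT a (rT p b)
        = rT (rT p a) b - rT p (mul a b))
    -- (2) `V ⊕ {0}` is a sub-bimodule
    ∧ (∀ (a : A) (v : V), (lT a (v, 0)).2 = 0 ∧ (rT (v, 0) a).2 = 0)
    -- (3) the projection `T → W` is a surjective bimodule morphism with kernel `V ⊕ {0}`,
    -- so `T/(V ⊕ {0}) ≅ W`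
    ∧ (∀ (a : A) (p : V × W), (lT a p).2 = lW a p.2 ∧ (rT p a).2 = rW p.2 a)
    ∧ (∀ w : W, ∃ p : V × W, p.2 = w)
    ∧ (∀ p : V × W, p.2 = 0 ↔ ∃ v : V, p = (v, 0)) := by
  refine ⟨KV.LeftSymmetric.extLeft hV1 hW1 hθ, KV.MiddleSymmetric.extLeft_extRight hV2 hW2 hψ,
    fun a v => ⟨map_zero (lW a), LinearMap.map_zero₂ rW a⟩, fun a p => ⟨rfl, rfl⟩, fun w => ⟨(0, w), rfl⟩,
    fun p => ⟨fun h => ⟨p.1, Prod.ext rfl h⟩, ?_⟩⟩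
  rintro ⟨v, rfl⟩
  rfl

/-- given a (1,1)-cocycle pair `(θ, ψ)`, the space `T = V ⊕ W` with
actions `a·(v,w) = (av + θ(a,w), aw)` and `(v,w)·a = (va + ψ(w,a), wa)` is a
KV-bimodule of `A`, `V ⊕ {0}` is a sub-bimodule, and the quotient is `W`. -/
theorem extension_of_kv_modules_from_cocycle
    {F : Type*} [Field F] [CharZero F]
    {A : Type*} [AddCommGroup A] [Module F A]
    {V : Type*} [AddCommGroup V] [Module F V]
    {W : Type*} [AddCommGroup W] [Module F W]
    (mul : A →ₗ[F] A →ₗ[F] A)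
    (hA : ∀ a b c : A, mul (mul a b) c - mul a (mul b c)
        = mul (mul b a) c - mul b (mul a c))
    (lV : A →ₗ[F] V →ₗ[F] V) (rV : V →ₗ[F] A →ₗ[F] V)
    (hV1 : ∀ (a b : A) (v : V), lV (mul a b) v - lV a (lV b v)
        = lV (mul b a) v - lV b (lV a v))
    (hV2 : ∀ (a : A) (v : V) (b : A), rV (lV a v) b - lV a (rV v b)
        = rV (rV v a) b - rV v (mul a b))
    (lW : A →ₗ[F] W →ₗ[F] W) (rW : W →ₗ[F] A →ₗ[F] W)
    (hW1 : ∀ (a b : A) (w : W), lW (mul a b) w - lW a (lW b w)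
        = lW (mul b a) w - lW b (lW a w))
    (hW2 : ∀ (a : A) (w : W) (b : A), rW (lW a w) b - lW a (rW w b)
        = rW (rW w a) b - rW w (mul a b))
    (θ : A →ₗ[F] W →ₗ[F] V) (ψ : W →ₗ[F] A →ₗ[F] V)
    -- cocycle identity (i)
    (hθ : ∀ (a b : A) (w : W),
      - lV a (θ b w) + θ (mul a b) w + θ b (lW a w)
        + lV b (θ a w) - θ (mul b a) w - θ a (lW b w) = 0)
    -- cocycle identity (ii)
    (hψ : ∀ (a : A) (w : W) (b : A),
      - lV a (ψ w b) + ψ (lW a w) b + ψ w (mul a b) - rV (ψ w a) b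
        - ψ (rW w a) b - θ a (rW w b) + rV (θ a w) b = 0) :
    -- the actions on `T = V ⊕ W`
    letI lT : A → V × W → V × W := fun a p => (lV a p.1 + θ a p.2, lW a p.2)
    letI rT : V × W → A → V × W := fun p a => (rV p.1 a + ψ p.2 a, rW p.2 a)
    -- (1) `T` is a KV-bimodule of `A`
    (∀ (a b : A) (p : V × W), lT (mul a b) p - lT a (lT b p)
        = lT (mul b a) p - lT b (lT a p))
    ∧ (∀ (a : A) (p : V × W) (b : A), rT (lT a p) b - lT a (rT p b)
        = rT (rT p a) b - rT p (mul a b))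
    -- (2) `V ⊕ {0}` is a sub-bimodule
    ∧ (∀ (a : A) (v : V), (lT a (v, 0)).2 = 0 ∧ (rT (v, 0) a).2 = 0)
    -- (3) the projection `T → W` is a surjective bimodule morphism with kernel `V ⊕ {0}`,
    -- so `T/(V ⊕ {0}) ≅ W`
    ∧ (∀ (a : A) (p : V × W), (lT a p).2 = lW a p.2 ∧ (rT p a).2 = rW p.2 a)
    ∧ (∀ w : W, ∃ p : V × W, p.2 = w)
    ∧ (∀ p : V × W, p.2 = 0 ↔ ∃ v : V, p = (v, 0)) :=
  extension_of_kv_modules_from_cocycle_general mul lV rV hV1 hV2 lW rW hW1 hW2 θ ψ hθ hψ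
end

section
/- On ℝ² define the bilinear multiplication μ((λ₁,λ₂),(μ₁,μ₂)) := (0, λ₁μ₂), and for fixed real numbers α, β define S_{αβ}((λ₁,λ₂),(μ₁,μ₂)) := (αλ₁μ₁, βλ₁μ₁ + α(λ₁μ₂ + λ₂μ₁)). Then: (1) μ is left-symmetric, so (ℝ², μ) is a KV-algebra; (2) S_{αβ} is a 2-cocycle of this KV-algebra with coefficients in itself (δS_{αβ} = 0) and S_{αβ} is itself a left-symmetric multiplication; consequently μ + tS_{αβ} is a left-symmetric (KV) multiplication on ℝ² for every t ∈ ℝ; (3) if α ≠ 0 then S_{αβ} is not a coboundary: there is no linear map φ : ℝ² → ℝ² with S_{αβ}(a,b) = −aφ(b) + φ(ab) − φ(a)b for all a,b (products taken with μ). -/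
/-- The left-invariant flat torsion-free connection (28) on `Aff(ℝ)` in a
left-invariant frame: `μ((λ₁,λ₂),(μ₁,μ₂)) = (0, λ₁μ₂)`. -/
def affMul (p q : ℝ × ℝ) : ℝ × ℝ := (0, p.1 * q.2)

/-- The tensor `S_{αβ}((λ₁,λ₂),(μ₁,μ₂)) = (αλ₁μ₁, βλ₁μ₁ + α(λ₁μ₂ + λ₂μ₁))`. -/
def kvS (α β : ℝ) (p q : ℝ × ℝ) : ℝ × ℝ :=
  (α * p.1 * q.1, β * p.1 * q.1 + α * (p.1 * q.2 + p.2 * q.1))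

/-- The deformed multiplication `μ + tS_{αβ}`. -/
def kvMt (α β t : ℝ) (p q : ℝ × ℝ) : ℝ × ℝ := affMul p q + t • kvS α β p q

/-- (1) `μ` is left-symmetric; (2) `S_{αβ}` is a 2-cocycle of
`(ℝ², μ)` with coefficients in itself and is itself left-symmetric, hence
`μ + tS_{αβ}` is left-symmetric for every `t`; (3) if `α ≠ 0` then `S_{αβ}` is not
a coboundary. -/
theorem aff_line_cocycle (α β : ℝ) :
    -- (1) `μ` is left-symmetric
    (∀ a b c : ℝ × ℝ, affMul (affMul a b) c - affMul a (affMul b c)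
        = affMul (affMul b a) c - affMul b (affMul a c))
    -- (2a) `S_{αβ}` is a 2-cocycle: `δS_{αβ} = 0`
    ∧ (∀ a b c : ℝ × ℝ,
        - affMul a (kvS α β b c) + kvS α β (affMul a b) c + kvS α β b (affMul a c)
          - affMul (kvS α β b a) c + affMul b (kvS α β a c) - kvS α β (affMul b a) c
          - kvS α β a (affMul b c) + affMul (kvS α β a b) c = 0)
    -- (2b) `S_{αβ}` is itself left-symmetric
    ∧ (∀ a b c : ℝ × ℝ, kvS α β (kvS α β a b) c - kvS α β a (kvS α β b c)
        = kvS α β (kvS α β b a) c - kvS α β b (kvS α β a c))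
    -- (2c) consequently `μ + tS_{αβ}` is left-symmetric for every `t ∈ ℝ`
    ∧ (∀ t : ℝ, ∀ a b c : ℝ × ℝ,
        kvMt α β t (kvMt α β t a b) c - kvMt α β t a (kvMt α β t b c)
          = kvMt α β t (kvMt α β t b a) c - kvMt α β t b (kvMt α β t a c))
    -- (3) if `α ≠ 0` then `S_{αβ}` is not a coboundary
    ∧ (α ≠ 0 → ¬ ∃ φ : (ℝ × ℝ) →ₗ[ℝ] ℝ × ℝ, ∀ a b : ℝ × ℝ,
        kvS α β a b = - affMul a (φ b) + φ (affMul a b) - affMul (φ a) b) := by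
  refine ⟨?_, ?_, ?_, ?_, ?_⟩
  · intro a b c
    simp only [affMul, kvS, kvMt, Prod.ext_iff, Prod.fst_add, Prod.snd_add, Prod.fst_sub,
      Prod.snd_sub, Prod.fst_neg, Prod.snd_neg, Prod.smul_mk, smul_eq_mul, Prod.fst_zero,
      Prod.snd_zero]
    exact ⟨trivial, by ring⟩
  · intro a b c
    simp only [affMul, kvS, kvMt, Prod.ext_iff, Prod.fst_add, Prod.snd_add, Prod.fst_sub,
      Prod.snd_sub, Prod.fst_neg, Prod.snd_neg, Prod.smul_mk, smul_eq_mul, Prod.fst_zero,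
      Prod.snd_zero]
    constructor <;> ring
  · intro a b c
    simp only [affMul, kvS, kvMt, Prod.ext_iff, Prod.fst_add, Prod.snd_add, Prod.fst_sub,
      Prod.snd_sub, Prod.fst_neg, Prod.snd_neg, Prod.smul_mk, smul_eq_mul, Prod.fst_zero,
      Prod.snd_zero]
    constructor <;> ring
  · intro t a b c
    simp only [affMul, kvS, kvMt, Prod.ext_iff, Prod.fst_add, Prod.snd_add, Prod.fst_sub,
      Prod.snd_sub, Prod.fst_neg, Prod.snd_neg, Prod.smul_mk, smul_eq_mul, Prod.fst_zero,
      Prod.snd_zero]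
    constructor <;> ring
  · intro hα ⟨φ, hφ⟩
    have h := congrArg Prod.fst (hφ (1,0) (1,0))
    simp [kvS, affMul, Prod.ext_iff] at h
    exact hα (by rw [Prod.mk_zero_zero, map_zero, Prod.fst_zero] at h; exact h)
end

section
/- Let A be a KV-algebra over a field F of characteristic zero and W a left KV-module of A (so wa = 0 for all w ∈ W, a ∈ A). Assume there exists H ∈ A with aH = a for every a ∈ A. Then every parallel 2-chain is a coboundary: if g : A × A → W is a bilinear map satisfying a·g(b,c) = g(ab,c) + g(b,ac) for all a,b,c ∈ A, then, setting θ(a) := g(H,a), one has g(a,b) = a·θ(b) − θ(ab) for all a,b ∈ A; that is, g = δ(−θ) is exact in the KV complex C(A,W). -/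
theorem parallel_two_chain_is_exact_general
    {F : Type*} [Field F]
    {A : Type*} [AddCommGroup A] [Module F A]
    {W : Type*} [AddCommGroup W] [Module F W]
    (mul : A →ₗ[F] A →ₗ[F] A)
    (l : A →ₗ[F] W →ₗ[F] W)
    (H : A) (hH : ∀ a : A, mul a H = a)
    (g : A →ₗ[F] A →ₗ[F] W)
    (hg : ∀ a b c : A, l a (g b c) = g (mul a b) c + g b (mul a c)) :
    ∀ a b : A, g a b = l a (g H b) - g H (mul a b) :=
  -- the parallel identity at (a, H, b), with aH = a
  fun a b => eq_sub_of_add_eq (by rw [hg, hH])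

/-- algebraic content of Proposition 9.1: let `W` be a left KV-module
of a KV-algebra `A`, and suppose `H ∈ A` satisfies `aH = a` for every `a`.  Then every
parallel 2-chain `g` (i.e. `a·g(b,c) = g(ab,c) + g(b,ac)`) is exact:
`g(a,b) = a·θ(b) − θ(ab)` with `θ(a) := g(H,a)`, i.e. `g = δ(−θ)`. -/
theorem parallel_two_chain_is_exact
    {F : Type*} [Field F] [CharZero F]
    {A : Type*} [AddCommGroup A] [Module F A]
    {W : Type*} [AddCommGroup W] [Module F W]
    (mul : A →ₗ[F] A →ₗ[F] A)
    (hA : ∀ a b c : A, mul (mul a b) c - mul a (mul b c)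
        = mul (mul b a) c - mul b (mul a c))
    (l : A →ₗ[F] W →ₗ[F] W)
    (hW1 : ∀ (a b : A) (w : W), l (mul a b) w - l a (l b w)
        = l (mul b a) w - l b (l a w))
    (H : A) (hH : ∀ a : A, mul a H = a)
    (g : A →ₗ[F] A →ₗ[F] W)
    (hg : ∀ a b c : A, l a (g b c) = g (mul a b) c + g b (mul a c)) :
    ∀ a b : A, g a b = l a (g H b) - g H (mul a b) :=
  parallel_two_chain_is_exact_general mul l H hH g hg
end

section
/- Let A be a KV-algebra over a field F of characteristic zero and W a left KV-module of A, and let θ : W × W → W be a bilinear map. On G := A ⊕ W define the multiplication (a,w)(a',w') := (aa', aw' + θ(w,w')). Then this multiplication is left-symmetric (makes G a KV-algebra) if and only if both of the following hold: (i) a·θ(w,w') = θ(aw,w') + θ(w,aw') for all a ∈ A and w,w' ∈ W; and (ii) θ(w,θ(w',w'')) − θ(θ(w,w'),w'') = θ(w',θ(w,w'')) − θ(θ(w',w),w'') for all w,w',w'' ∈ W (θ is a KV-multiplication on W). -/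
/-!
Since `W` is a left module, the `A`-component of the product on `A × W` is just the product of
`A`, and the `W`-component of the left-symmetry defect of `((a,w),(b,v),(c,u))` splits into four
pieces: the left-module defect of `l` at `(a,b,u)`, the failure of `l a` and of `l b` to be
derivations of `θ`, and the left-symmetry defect of `θ` at `(w,v,u)`. Triples with suitable zero
components isolate the derivation defect and the defect of `θ`.
-/

section LeftSymmetry

variable {X : Type*} [AddCommGroup X]

def IsLeftSymmetric (m : X → X → X) : Prop :=
  ∀ x y z, m (m x y) z - m x (m y z) = m (m y x) z - m y (m x z)

def leftSymmetryDefect (m : X → X → X) (x y z : X) : X :=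
  (m (m x y) z - m x (m y z)) - (m (m y x) z - m y (m x z))

theorem isLeftSymmetric_iff_leftSymmetryDefect_eq_zero (m : X → X → X) :
    IsLeftSymmetric m ↔ ∀ x y z, leftSymmetryDefect m x y z = 0 :=
  forall₃_congr fun _ _ _ => sub_eq_zero.symm

end LeftSymmetry

section SemidirectMul

variable {F : Type*} [CommRing F]
  {A : Type*} [AddCommGroup A] [Module F A]
  {W : Type*} [AddCommGroup W] [Module F W]
  (mul : A →ₗ[F] A →ₗ[F] A) (l : A →ₗ[F] W →ₗ[F] W) (θ : W →ₗ[F] W →ₗ[F] W)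

def semidirectMul (x y : A × W) : A × W :=
  (mul x.1 y.1, l x.1 y.2 + θ x.2 y.2)

theorem fst_leftSymmetryDefect_semidirectMul (x y z : A × W) :
    (leftSymmetryDefect (semidirectMul mul l θ) x y z).1 =
      leftSymmetryDefect (fun a b => mul a b) x.1 y.1 z.1 :=
  rfl

theorem snd_leftSymmetryDefect_semidirectMul (a b c : A) (w v u : W) :
    (leftSymmetryDefect (semidirectMul mul l θ) (a, w) (b, v) (c, u)).2 =
      (l (mul a b) u - l a (l b u) - (l (mul b a) u - l b (l a u)))
        - (l a (θ v u) - θ (l a v) u - θ v (l a u))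
        + (l b (θ w u) - θ (l b w) u - θ w (l b u))
        + leftSymmetryDefect (fun w w' => θ w w') w v u := by
  simp only [leftSymmetryDefect, semidirectMul, Prod.snd_sub, map_add, LinearMap.add_apply]
  abel

variable {mul l θ}

theorem isLeftSymmetric_semidirectMul (hA : IsLeftSymmetric fun a b => mul a b)
    (hl : ∀ (a b : A) (w : W), l (mul a b) w - l a (l b w) = l (mul b a) w - l b (l a w))
    (hder : ∀ (a : A) (w w' : W), l a (θ w w') = θ (l a w) w' + θ w (l a w'))
    (hθ : IsLeftSymmetric fun w w' => θ w w') :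
    IsLeftSymmetric (semidirectMul mul l θ) := by
  rw [isLeftSymmetric_iff_leftSymmetryDefect_eq_zero] at hA hθ ⊢
  rintro ⟨a, w⟩ ⟨b, v⟩ ⟨c, u⟩
  refine Prod.ext ((fst_leftSymmetryDefect_semidirectMul ..).trans (hA a b c)) ?_
  rw [Prod.snd_zero, snd_leftSymmetryDefect_semidirectMul, hθ, sub_eq_zero.2 (hl a b u),
    hder a v u, hder b w u]
  abel

theorem map_derivation_of_isLeftSymmetric_semidirectMul
    (h : IsLeftSymmetric (semidirectMul mul l θ)) (a : A) (w w' : W) :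
    l a (θ w w') = θ (l a w) w' + θ w (l a w') := by
  have hder := congrArg Prod.snd <|
    (isLeftSymmetric_iff_leftSymmetryDefect_eq_zero _).1 h (a, 0) (0, w) (0, w')
  rw [snd_leftSymmetryDefect_semidirectMul] at hder
  simp only [leftSymmetryDefect, map_zero, LinearMap.zero_apply, Prod.snd_zero, sub_self,
    zero_sub, neg_sub, add_zero] at hder
  linear_combination (norm := abel_nf) -hder

theorem isLeftSymmetric_of_isLeftSymmetric_semidirectMul
    (h : IsLeftSymmetric (semidirectMul mul l θ)) :
    IsLeftSymmetric fun w w' => θ w w' := by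
  intro w w' w''
  simpa [semidirectMul] using congrArg Prod.snd (h (0, w) (0, w') (0, w''))

end SemidirectMul

theorem connectionlike_deformation_iff_general
    {F : Type*} [Field F]
    {A : Type*} [AddCommGroup A] [Module F A]
    {W : Type*} [AddCommGroup W] [Module F W]
    (mul : A →ₗ[F] A →ₗ[F] A)
    (hA : ∀ a b c : A, mul (mul a b) c - mul a (mul b c)
        = mul (mul b a) c - mul b (mul a c))
    (l : A →ₗ[F] W →ₗ[F] W)
    (hW1 : ∀ (a b : A) (w : W), l (mul a b) w - l a (l b w)
        = l (mul b a) w - l b (l a w))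
    (θ : W →ₗ[F] W →ₗ[F] W) :
    letI mulG : A × W → A × W → A × W :=
      fun x y => (mul x.1 y.1, l x.1 y.2 + θ x.2 y.2)
    (∀ x y z : A × W, mulG (mulG x y) z - mulG x (mulG y z)
        = mulG (mulG y x) z - mulG y (mulG x z))
    ↔ ((∀ (a : A) (w w' : W), l a (θ w w') = θ (l a w) w' + θ w (l a w'))
        ∧ (∀ w w' w'' : W,
            θ w (θ w' w'') - θ (θ w w') w''
              = θ w' (θ w w'') - θ (θ w' w) w'')) := by
  change IsLeftSymmetric (semidirectMul mul l θ) ↔ _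
  refine ⟨fun h => ⟨map_derivation_of_isLeftSymmetric_semidirectMul h, fun w w' w'' => ?_⟩,
    fun ⟨hder, hθ⟩ => isLeftSymmetric_semidirectMul hA hW1 hder fun w w' w'' => ?_⟩
  · linear_combination (norm := abel_nf)
      -isLeftSymmetric_of_isLeftSymmetric_semidirectMul h w w' w''
  · linear_combination (norm := abel_nf) -hθ w w' w''

/-- Proposition 10.1: for a left KV-module `W` of a KV-algebra `A`
and a bilinear `θ : W × W → W`, the multiplication
`(a,w)(a',w') := (aa', aw' + θ(w,w'))` on `G = A ⊕ W` is left-symmetric if and only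
if (i) `a·θ(w,w') = θ(aw,w') + θ(w,aw')` and (ii) `θ` is a KV-multiplication on `W`. -/
theorem connectionlike_deformation_iff
    {F : Type*} [Field F] [CharZero F]
    {A : Type*} [AddCommGroup A] [Module F A]
    {W : Type*} [AddCommGroup W] [Module F W]
    (mul : A →ₗ[F] A →ₗ[F] A)
    (hA : ∀ a b c : A, mul (mul a b) c - mul a (mul b c)
        = mul (mul b a) c - mul b (mul a c))
    (l : A →ₗ[F] W →ₗ[F] W)
    (hW1 : ∀ (a b : A) (w : W), l (mul a b) w - l a (l b w)
        = l (mul b a) w - l b (l a w))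
    (θ : W →ₗ[F] W →ₗ[F] W) :
    letI mulG : A × W → A × W → A × W :=
      fun x y => (mul x.1 y.1, l x.1 y.2 + θ x.2 y.2)
    (∀ x y z : A × W, mulG (mulG x y) z - mulG x (mulG y z)
        = mulG (mulG y x) z - mulG y (mulG x z))
    ↔ ((∀ (a : A) (w w' : W), l a (θ w w') = θ (l a w) w' + θ w (l a w'))
        ∧ (∀ w w' w'' : W,
            θ w (θ w' w'') - θ (θ w w') w''
              = θ w' (θ w w'') - θ (θ w' w) w'')) :=
  connectionlike_deformation_iff_general mul hA l hW1 θ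
end
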